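/- arXiv:1205.4875 — 8 statements merged into one kernel-verified Lean document; each statement's English description precedes it below -/
import Mathlib

section
/- Let n,k ≥ 1, let G be a finite abelian group of order k, and let φ : ℤ^n → G be a surjective group homomorphism. Then π(n,G,φ) ≥ f(n,k). -/
open Set

/-- The Lee (Manhattan) distance between two words in `ℤ^n`. -/
def leeDist {n : ℕ} (v w : Fin n → ℤ) : ℕ := ∑ i, (v i - w i).natAbs

/-- The Lee sphere `S_{n,r}` of radius `r` centered at the origin. -/
def leeSphere (n r : ℕ) : Set (Fin n → ℤ) := {x | leeDist x 0 ≤ r}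

/-- `|S_{n,r}|`, the cardinality of the Lee sphere. -/
noncomputable def sphereCard (n r : ℕ) : ℕ := (leeSphere n r).ncard

/-- `π(n,G,φ,g)`: the minimum Lee distance from the origin of a preimage of `g` under `φ`. -/
noncomputable def piMinDist {n : ℕ} {G : Type*} [AddCommGroup G]
    (φ : (Fin n → ℤ) →+ G) (g : G) : ℕ :=
  sInf {d | ∃ x : Fin n → ℤ, φ x = g ∧ leeDist x 0 = d}

/-- `π(n,G,φ) = ∑_{g ∈ G} π(n,G,φ,g)`. -/
noncomputable def piEmbed {n : ℕ} {G : Type*} [AddCommGroup G] [Fintype G]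
    (φ : (Fin n → ℤ) →+ G) : ℕ :=
  ∑ g : G, piMinDist φ g

/-- `f(n,k) = ∑_{i=1}^r i(|S_{n,i}| − |S_{n,i−1}|) + (r+1)(k − |S_{n,r}|)`,
where `r` is the unique integer with `|S_{n,r}| ≤ k < |S_{n,r+1}|`. -/
noncomputable def fnk (n k r : ℕ) : ℕ :=
  (∑ i ∈ Finset.Icc 1 r, i * (sphereCard n i - sphereCard n (i - 1)))
    + (r + 1) * (k - sphereCard n r)

/-!
Choose for every `g ∈ G` a preimage of minimal Lee weight; these are `k` distinct points of `ℤ^n`,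
and at most `|S_{n,i}|` of them have weight `≤ i`. Counting each point once for every `i < r + 1`
below its weight gives `π(n,G,φ) ≥ ∑_{i=0}^{r} (k − |S_{n,i}|)`, and this sum equals `f(n,k)`
by summation by parts.
-/

open Finset

lemma natAbs_le_leeDist_zero {n : ℕ} (x : Fin n → ℤ) (j : Fin n) : (x j).natAbs ≤ leeDist x 0 := by
  simpa [leeDist] using
    single_le_sum (f := fun j => (x j - 0).natAbs) (fun _ _ => Nat.zero_le _) (mem_univ j)

lemma leeSphere_finite (n r : ℕ) : (leeSphere n r).Finite := by
  refine (Set.Finite.pi fun _ : Fin n => Set.finite_Icc (-(r : ℤ)) r).subset fun x hx j _ => ?_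
  have := (natAbs_le_leeDist_zero x j).trans hx
  simp only [Set.mem_Icc]
  omega

lemma sphereCard_mono (n : ℕ) : Monotone (sphereCard n) :=
  fun _ _ h => Set.ncard_le_ncard (fun _ hx => le_trans hx h) (leeSphere_finite n _)

lemma card_filter_leeDist_le_sphereCard {n : ℕ} (T : Finset (Fin n → ℤ)) (i : ℕ) :
    #{x ∈ T | leeDist x 0 ≤ i} ≤ sphereCard n i := by
  rw [sphereCard, ← Set.ncard_coe_finset]
  exact Set.ncard_le_ncard (fun x hx => (mem_filter.1 hx).2) (leeSphere_finite n i)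

lemma fnk_eq_sum_range {n k r : ℕ} (hr : sphereCard n r ≤ k) :
    fnk n k r = ∑ i ∈ range (r + 1), (k - sphereCard n i) := by
  induction r with
  | zero => simp [fnk]
  | succ r ih =>
    have hmono : sphereCard n r ≤ sphereCard n (r + 1) := sphereCard_mono n r.le_succ
    rw [sum_range_succ, ← ih (hmono.trans hr), fnk, fnk, sum_Icc_succ_top (by omega),
      Nat.add_sub_cancel, add_mul (r + 1) 1, one_mul]
    have hstep : (r + 1) * (sphereCard n (r + 1) - sphereCard n r) + (r + 1) * (k - sphereCard n (r + 1))
        = (r + 1) * (k - sphereCard n r) := by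
      rw [← Nat.mul_add]; congr 1; omega
    linarith

lemma sum_card_filter_lt_le_sum {α : Type*} (T : Finset α) (d : α → ℕ) (m : ℕ) :
    ∑ i ∈ range m, #{x ∈ T | i < d x} ≤ ∑ x ∈ T, d x := by
  simp only [card_filter]
  rw [sum_comm]
  refine sum_le_sum fun x _ => ?_
  rw [← card_filter]
  simpa using Finset.card_le_card (fun i hi => by simp_all : {i ∈ range m | i < d x} ⊆ range (d x))

theorem fnk_le_sum_leeDist {n k r : ℕ} (hr : sphereCard n r ≤ k) (T : Finset (Fin n → ℤ))
    (hT : #T = k) : fnk n k r ≤ ∑ x ∈ T, leeDist x 0 := by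
  rw [fnk_eq_sum_range hr]
  refine le_trans (sum_le_sum fun i _ => ?_) (sum_card_filter_lt_le_sum T (leeDist · 0) (r + 1))
  have hle := card_filter_leeDist_le_sphereCard T i
  have hsplit := card_filter_add_card_filter_not (s := T) (p := fun x => leeDist x 0 ≤ i)
  simp only [not_le] at hsplit
  omega

lemma exists_leeDist_eq_piMinDist {n : ℕ} {G : Type*} [AddCommGroup G] {φ : (Fin n → ℤ) →+ G}
    (hφ : Function.Surjective φ) (g : G) : ∃ x, φ x = g ∧ leeDist x 0 = piMinDist φ g :=
  Nat.sInf_mem (s := {d | ∃ x, φ x = g ∧ leeDist x 0 = d})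
    (let ⟨x, hx⟩ := hφ g; ⟨_, x, hx, rfl⟩)

theorem embedding_number_lower_bound_general
    (n k : ℕ)
    (G : Type) [AddCommGroup G] [Fintype G] (hG : Nat.card G = k)
    (φ : (Fin n → ℤ) →+ G) (hφ : Function.Surjective φ)
    (r : ℕ) (hr₁ : sphereCard n r ≤ k) :
    fnk n k r ≤ piEmbed φ := by
  classical
  choose x hφx hx using exists_leeDist_eq_piMinDist hφ
  have hinj : Function.Injective x := Function.LeftInverse.injective hφx
  have hcard : #(univ.image x) = k := by
    rw [card_image_of_injective _ hinj, card_univ, ← Nat.card_eq_fintype_card, hG]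
  calc fnk n k r ≤ ∑ y ∈ univ.image x, leeDist y 0 := fnk_le_sum_leeDist hr₁ _ hcard
    _ = piEmbed φ := by rw [sum_image hinj.injOn]; exact sum_congr rfl fun g _ => hx g

theorem embedding_number_lower_bound
    (n k : ℕ) (hn : 1 ≤ n) (hk : 1 ≤ k)
    (G : Type) [AddCommGroup G] [Fintype G] (hG : Nat.card G = k)
    (φ : (Fin n → ℤ) →+ G) (hφ : Function.Surjective φ)
    (r : ℕ) (hr₁ : sphereCard n r ≤ k) (hr₂ : k < sphereCard n (r + 1)) :
    fnk n k r ≤ piEmbed φ :=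
  embedding_number_lower_bound_general n k G hG φ hφ r hr₁
end

section
/- For every k ≥ 1, letting r be the unique integer with |S_{2,r}| ≤ k < |S_{2,r+1}|, there exists a group homomorphism φ : ℤ² → ℤ/kℤ whose restriction to S_{2,r} is injective and whose restriction to S_{2,r+1} is surjective. In particular, every k ≥ 1 has an optimal embedding in ℤ², attained by the cyclic group ℤ/kℤ. -/
open Set

/-- The linear embedding map `(x, y) ↦ c·x - (c+1)·y  (mod k)`. -/
def phiHom (k : ℕ) (c : ℤ) : (Fin 2 → ℤ) →+ ZMod k where
  toFun v := ((c * v 0 - (c + 1) * v 1 : ℤ) : ZMod k)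
  map_zero' := by simp
  map_add' v w := by
    show ((c * (v + w) 0 - (c + 1) * (v + w) 1 : ℤ) : ZMod k)
      = ((c * v 0 - (c + 1) * v 1 : ℤ) : ZMod k) + ((c * w 0 - (c + 1) * w 1 : ℤ) : ZMod k)
    have e : (c * (v + w) 0 - (c + 1) * (v + w) 1 : ℤ)
        = (c * v 0 - (c + 1) * v 1) + (c * w 0 - (c + 1) * w 1) := by
      simp only [Pi.add_apply]; ring
    rw [e]; push_cast; ring

lemma phiHom_apply (k : ℕ) (c : ℤ) (v : Fin 2 → ℤ) :
    phiHom k c v = ((c * v 0 - (c + 1) * v 1 : ℤ) : ZMod k) := rfl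

lemma mem_leeSphere_iff {R : ℕ} {v : Fin 2 → ℤ} :
    v ∈ leeSphere 2 R ↔ (v 0).natAbs + (v 1).natAbs ≤ R := by
  simp [leeSphere, leeDist, Fin.sum_univ_two]

lemma leeSphere_finite_s5 (R : ℕ) : (leeSphere 2 R).Finite := by
  apply Set.Finite.subset
    (Set.Finite.pi (fun _ : Fin 2 => Set.finite_Icc (-(R : ℤ)) R))
  intro v hv
  rw [mem_leeSphere_iff] at hv
  rw [Set.mem_pi]
  have h0 : v 0 ∈ Set.Icc (-(R : ℤ)) R := by rw [Set.mem_Icc]; omega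
  have h1 : v 1 ∈ Set.Icc (-(R : ℤ)) R := by rw [Set.mem_Icc]; omega
  intro i _
  fin_cases i
  · exact h0
  · exact h1

/-- Injectivity of `phiHom` on the Lee sphere of radius `R`, provided `c ≥ R` and
`k ≥ 2Rc + 2R + 1`. -/
lemma injOn_phiHom (k : ℕ) (c : ℤ) (R : ℕ)
    (hc : (R : ℤ) ≤ c) (hk : 2 * (R : ℤ) * c + 2 * R + 1 ≤ (k : ℤ)) :
    Set.InjOn (phiHom k c) (leeSphere 2 R) := by
  intro v hv w hw h
  rw [mem_leeSphere_iff] at hv hw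
  rw [phiHom_apply, phiHom_apply] at h
  have hmod := (ZMod.intCast_eq_intCast_iff _ _ _).mp h
  obtain ⟨j0, hj0'⟩ := Int.ModEq.dvd hmod
  set a : ℤ := v 0 - w 0 with ha
  set b : ℤ := v 1 - w 1 with hb
  set j : ℤ := -j0 with hjdef
  have heq : (2 * c + 1) * (a - b) - (a + b) = 2 * ((k : ℤ) * j) := by
    rw [ha, hb, hjdef]; linear_combination (-2 : ℤ) * hj0'
  have hR0 : (0 : ℤ) ≤ (R : ℤ) := Int.natCast_nonneg R
  have hq1 : a - b ≤ 2 * (R : ℤ) := by omega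
  have hq2 : -(2 * (R : ℤ)) ≤ a - b := by omega
  have hp1 : a + b ≤ 2 * (R : ℤ) := by omega
  have hp2 : -(2 * (R : ℤ)) ≤ a + b := by omega
  have hm0 : (0 : ℤ) ≤ 2 * c + 1 := by linarith
  have hub2 : (2 * c + 1) * (a - b) ≤ 4 * (R : ℤ) * c + 2 * R := by
    have h' := mul_le_mul_of_nonneg_left hq1 hm0
    have e : (2 * c + 1) * (2 * (R : ℤ)) = 4 * R * c + 2 * R := by ring
    linarith
  have hlb2 : -(4 * (R : ℤ) * c + 2 * R) ≤ (2 * c + 1) * (a - b) := by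
    have h' := mul_le_mul_of_nonneg_left hq2 hm0
    have e : (2 * c + 1) * (-(2 * (R : ℤ))) = -(4 * R * c + 2 * R) := by ring
    linarith
  have hrc : 2 * (R : ℤ) * c = 2 * ((R : ℤ) * c) := by ring
  have hrc2 : 4 * (R : ℤ) * c = 4 * ((R : ℤ) * c) := by ring
  rw [hrc] at hk
  rw [hrc2] at hub2 hlb2
  have hj0 : j = 0 := by
    rcases lt_trichotomy j 0 with hlt | h0 | hgt
    · have hj1 : j ≤ -1 := by omega
      have h' : (k : ℤ) * j ≤ (k : ℤ) * (-1) :=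
        mul_le_mul_of_nonneg_left hj1 (by linarith)
      have e : (k : ℤ) * (-1) = -(k : ℤ) := by ring
      linarith
    · exact h0
    · have hj1 : (1 : ℤ) ≤ j := by omega
      have h' : (k : ℤ) * 1 ≤ (k : ℤ) * j :=
        mul_le_mul_of_nonneg_left hj1 (by linarith)
      have e : (k : ℤ) * 1 = (k : ℤ) := by ring
      linarith
  rw [hj0, mul_zero, mul_zero] at heq
  -- now (2c+1)(a-b) = a+b
  have hq0 : a - b = 0 := by
    rcases lt_trichotomy (a - b) 0 with hlt | h0 | hgt
    · have h1 : a - b ≤ -1 := by omega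
      have h' : (2 * c + 1) * (a - b) ≤ (2 * c + 1) * (-1) :=
        mul_le_mul_of_nonneg_left h1 hm0
      have e : (2 * c + 1) * (-1 : ℤ) = -(2 * c) - 1 := by ring
      linarith
    · exact h0
    · have h1 : (1 : ℤ) ≤ a - b := by omega
      have h' : (2 * c + 1) * 1 ≤ (2 * c + 1) * (a - b) :=
        mul_le_mul_of_nonneg_left h1 hm0
      have e : (2 * c + 1) * (1 : ℤ) = 2 * c + 1 := by ring
      linarith
  have hT : (2 * c + 1) * (a - b) = 0 := by rw [hq0]; ring
  have hpz : a + b = 0 := by linarith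
  have e0 : v 0 = w 0 := by omega
  have e1 : v 1 = w 1 := by omega
  funext i
  fin_cases i
  · exact e0
  · exact e1

/-- Surjectivity of `phiHom` from the Lee sphere of radius `R`, provided `0 ≤ c ≤ R` and
`k ≤ 2Rc + 2R + 1`. -/
lemma surjOn_phiHom (k : ℕ) (hk : 1 ≤ k) (c : ℤ) (R : ℕ)
    (hc0 : 0 ≤ c) (hc : c ≤ (R : ℤ)) (hkle : (k : ℤ) ≤ 2 * (R : ℤ) * c + 2 * R + 1) :
    Set.SurjOn (phiHom k c) (leeSphere 2 R) Set.univ := by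
  intro z _
  obtain ⟨N, rfl⟩ := ZMod.intCast_surjective z
  have hk1 : (1 : ℤ) ≤ (k : ℤ) := by exact_mod_cast hk
  have hn0 : (0 : ℤ) < 2 * (k : ℤ) := by linarith
  set n : ℤ := 2 * (k : ℤ) with hn
  set m : ℤ := 2 * c + 1 with hm
  have hm0 : (0 : ℤ) < m := by omega
  set g : ℤ → ℤ := fun q => (m * q - 2 * N + R) % n with hg
  have hgdef : ∀ q : ℤ, g q = (m * q - 2 * N + R) % n := fun _ => rfl
  have hgnn : ∀ q : ℤ, 0 ≤ g q := fun q => Int.emod_nonneg _ (by omega)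
  have hglt : ∀ q : ℤ, g q < n := fun q => Int.emod_lt_of_pos _ hn0
  have key : ∃ p q : ℤ, -(R : ℤ) ≤ p ∧ p ≤ R ∧ -(R : ℤ) ≤ q ∧ q ≤ R ∧
      ∃ j : ℤ, m * q - p - 2 * N = n * j := by
    by_cases hex : ∃ q : ℤ, -(R : ℤ) ≤ q ∧ q ≤ R ∧ g q ≤ 2 * R
    · obtain ⟨q, hq1, hq2, hq3⟩ := hex
      refine ⟨g q - R, q, by linarith [hgnn q], by linarith, hq1, hq2,
        (m * q - 2 * N + R) / n, ?_⟩
      have hd : g q = (m * q - 2 * N + R) - n * ((m * q - 2 * N + R) / n) := by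
        rw [hgdef]; exact Int.emod_def _ _
      linarith [hd]
    · push_neg at hex
      exfalso
      have hstep : ∀ t : ℕ, (t : ℤ) ≤ 2 * R →
          g (-(R : ℤ) + t) = g (-(R : ℤ)) + t * m := by
        intro t
        induction t with
        | zero => intro _; norm_num
        | succ t ih =>
          intro hle
          have htR : (t : ℤ) ≤ 2 * R := by push_cast at hle ⊢; omega
          have hprev := ih htR
          set q₀ : ℤ := -(R : ℤ) + t with hq₀
          have hq₀1 : -(R : ℤ) ≤ q₀ := by
            have : (0 : ℤ) ≤ (t : ℤ) := Int.natCast_nonneg t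
            omega
          have hq₀2 : q₀ ≤ R := by push_cast at hle; omega
          have hlo : 2 * (R : ℤ) < g q₀ := hex q₀ hq₀1 hq₀2
          have hq₁2 : q₀ + 1 ≤ R := by push_cast at hle; omega
          have hlo1 : 2 * (R : ℤ) < g (q₀ + 1) := hex (q₀ + 1) (by omega) hq₁2
          have e2 : g (q₀ + 1) = (g q₀ + m) % n := by
            rw [hgdef, hgdef]
            have e1 : m * (q₀ + 1) - 2 * N + R = (m * q₀ - 2 * N + R) + m := by ring
            rw [e1, Int.add_emod, Int.add_emod ((m * q₀ - 2 * N + R) % n) m,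
              Int.emod_emod_of_dvd _ dvd_rfl]
          have hcase : g q₀ + m < n := by
            by_contra hwrap
            push_neg at hwrap
            have hv : g (q₀ + 1) = g q₀ + m - n := by
              rw [e2]
              calc (g q₀ + m) % n = (g q₀ + m + n * (-1)) % n :=
                    (Int.add_mul_emod_self_left (g q₀ + m) n (-1)).symm
                _ = (g q₀ + m - n) % n := by
                    rw [show g q₀ + m + n * (-1) = g q₀ + m - n by ring]
                _ = g q₀ + m - n :=
                    Int.emod_eq_of_lt (by omega) (by linarith [hglt q₀])
            have := hglt q₀
            omega
          have e3 : g (q₀ + 1) = g q₀ + m := by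
            rw [e2]
            exact Int.emod_eq_of_lt (by linarith [hgnn q₀]) hcase
          have hco : -(R : ℤ) + ((t : ℤ) + 1) = q₀ + 1 := by omega
          push_cast
          rw [hco, e3, hprev]
          ring
      have hA := hstep (2 * R) (by push_cast; omega)
      have hRR : (-(R : ℤ) + ((2 * R : ℕ) : ℤ)) = (R : ℤ) := by push_cast; ring
      rw [hRR] at hA
      have hcast : ((2 * R : ℕ) : ℤ) = 2 * (R : ℤ) := by push_cast; ring
      rw [hcast] at hA
      have h1 : 2 * (R : ℤ) < g (-(R : ℤ)) := hex _ (by omega) (by omega)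
      have h2 : g (R : ℤ) < n := hglt _
      have hb1 : g (-(R : ℤ)) + 2 * (R : ℤ) * m < n := by
        have := h2; rw [hA] at this; linarith
      have hb2 : n ≤ 2 * (R : ℤ) * m + 2 * (R : ℤ) + 2 := by
        rw [hn, hm]; nlinarith
      have hsand1 : g (-(R : ℤ)) = 2 * (R : ℤ) + 1 := by linarith
      have hsand2 : n = 2 * (R : ℤ) * m + 2 * (R : ℤ) + 2 := by linarith
      -- divisibility from the value of g(-R)
      have hd : g (-(R : ℤ)) = (m * (-(R : ℤ)) - 2 * N + R)
          - n * ((m * (-(R : ℤ)) - 2 * N + R) / n) := by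
        rw [hgdef]; exact Int.emod_def _ _
      set j : ℤ := (m * (-(R : ℤ)) - 2 * N + R) / n with hjdef
      have hfin : m * (-(R : ℤ)) - 2 * N + R - (2 * (R : ℤ) + 1) = n * j := by
        rw [← hsand1]; linarith [hd]
      rw [hsand2, hm] at hfin
      set P : ℤ := c * (R : ℤ) with hP
      set Q : ℤ := ((R : ℤ) * (2 * c + 1) + (R : ℤ) + 1) * j with hQ
      have hfin2 : -2 * P - 2 * (R : ℤ) - 2 * N - 1 = 2 * Q := by
        rw [hP, hQ]; linear_combination hfin
      omega
  obtain ⟨p, q, hp1, hp2, hq1, hq2, j, hj⟩ := key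
  have hpar : ∃ x : ℤ, p + q = 2 * x := by
    refine ⟨(c + 1) * q - N - (k : ℤ) * j, ?_⟩
    rw [hm] at hj
    rw [hn] at hj
    linarith [hj]
  obtain ⟨x, hx⟩ := hpar
  set y : ℤ := p - x with hy
  refine ⟨![x, y], ?_, ?_⟩
  · rw [mem_leeSphere_iff]
    have h0 : (![x, y] : Fin 2 → ℤ) 0 = x := rfl
    have h1 : (![x, y] : Fin 2 → ℤ) 1 = y := rfl
    rw [h0, h1]
    omega
  · rw [phiHom_apply]
    have h0 : (![x, y] : Fin 2 → ℤ) 0 = x := rfl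
    have h1 : (![x, y] : Fin 2 → ℤ) 1 = y := rfl
    rw [h0, h1]
    rw [ZMod.intCast_eq_intCast_iff]
    have hval : c * x - (c + 1) * y - N = (k : ℤ) * j := by
      rw [hm, hn] at hj
      have hqe : x - y = q := by omega
      have hpe : x + y = p := by omega
      have h2 : 2 * (c * x - (c + 1) * y - N) = 2 * ((k : ℤ) * j) := by
        linear_combination hj + (2 * c + 1) * hqe - hpe
      linarith
    exact Int.ModEq.symm ((Int.modEq_iff_dvd).mpr ⟨j, hval⟩)

/-- Lower bound for the sphere cardinality, via surjectivity of the perfect-code map. -/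
lemma sphereCard_lb (r : ℕ) : 2 * r * r + 2 * r + 1 ≤ sphereCard 2 r := by
  set k0 : ℕ := 2 * r * r + 2 * r + 1 with hk0
  have hsurj : Set.SurjOn (phiHom k0 (r : ℤ)) (leeSphere 2 r) Set.univ := by
    apply surjOn_phiHom k0 (by omega) (r : ℤ) r (Int.natCast_nonneg r) le_rfl
    rw [hk0]; push_cast; linarith
  haveI : NeZero k0 := ⟨by omega⟩
  have hcard : (Set.univ : Set (ZMod k0)).ncard = k0 := by
    rw [Set.ncard_univ, Nat.card_eq_fintype_card, ZMod.card]
  calc k0 = (Set.univ : Set (ZMod k0)).ncard := hcard.symm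
    _ ≤ ((phiHom k0 (r : ℤ)) '' (leeSphere 2 r)).ncard :=
        Set.ncard_le_ncard hsurj ((leeSphere_finite_s5 r).image _)
    _ ≤ (leeSphere 2 r).ncard := Set.ncard_image_le (leeSphere_finite_s5 r)

/-- Upper bound for the sphere cardinality, via injectivity of the perfect-code map. -/
lemma sphereCard_ub (r : ℕ) : sphereCard 2 (r + 1) ≤ 2 * r * r + 6 * r + 5 := by
  set k1 : ℕ := 2 * r * r + 6 * r + 5 with hk1
  have hinj : Set.InjOn (phiHom k1 ((r : ℤ) + 1)) (leeSphere 2 (r + 1)) := by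
    apply injOn_phiHom k1 ((r : ℤ) + 1) (r + 1) (by push_cast; omega)
    rw [hk1]; push_cast; linarith
  haveI : NeZero k1 := ⟨by omega⟩
  have hcard : (Set.univ : Set (ZMod k1)).ncard = k1 := by
    rw [Set.ncard_univ, Nat.card_eq_fintype_card, ZMod.card]
  calc sphereCard 2 (r + 1)
      = ((phiHom k1 ((r : ℤ) + 1)) '' (leeSphere 2 (r + 1))).ncard :=
        (Set.ncard_image_of_injOn hinj).symm
    _ ≤ (Set.univ : Set (ZMod k1)).ncard :=
        Set.ncard_le_ncard (Set.subset_univ _) Set.finite_univ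
    _ = k1 := hcard

theorem optimal_embedding_dim_two (k : ℕ) (hk : 1 ≤ k)
    (r : ℕ) (hr₁ : sphereCard 2 r ≤ k) (hr₂ : k < sphereCard 2 (r + 1)) :
    ∃ φ : (Fin 2 → ℤ) →+ ZMod k,
      Set.InjOn φ (leeSphere 2 r) ∧ Set.SurjOn φ (leeSphere 2 (r + 1)) Set.univ := by
  have hlb : 2 * r * r + 2 * r + 1 ≤ k := le_trans (sphereCard_lb r) hr₁
  have hub : k ≤ 2 * r * r + 6 * r + 4 := by
    have := lt_of_lt_of_le hr₂ (sphereCard_ub r)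
    omega
  have hlbz : ((2 * r * r + 2 * r + 1 : ℕ) : ℤ) ≤ (k : ℤ) := by exact_mod_cast hlb
  have hubz : (k : ℤ) ≤ ((2 * r * r + 6 * r + 4 : ℕ) : ℤ) := by exact_mod_cast hub
  push_cast at hlbz hubz
  by_cases hcase : k ≤ 2 * r * r + 4 * r + 2
  · have hcz : (k : ℤ) ≤ ((2 * r * r + 4 * r + 2 : ℕ) : ℤ) := by exact_mod_cast hcase
    push_cast at hcz
    refine ⟨phiHom k (r : ℤ), ?_, ?_⟩
    · exact injOn_phiHom k (r : ℤ) r le_rfl (by linarith)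
    · exact surjOn_phiHom k hk (r : ℤ) (r + 1) (Int.natCast_nonneg r)
        (by push_cast; omega) (by push_cast; linarith)
  · have hcz : ((2 * r * r + 4 * r + 3 : ℕ) : ℤ) ≤ (k : ℤ) := by
      have : 2 * r * r + 4 * r + 3 ≤ k := by omega
      exact_mod_cast this
    push_cast at hcz
    refine ⟨phiHom k ((r : ℤ) + 1), ?_, ?_⟩
    · exact injOn_phiHom k ((r : ℤ) + 1) r (by omega) (by linarith)
    · exact surjOn_phiHom k hk ((r : ℤ) + 1) (r + 1) (by omega)
        (by push_cast; omega) (by push_cast; linarith)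
end

section
/- Fix r ≥ 1 and let Φ : ℤ² → ℤ be the group homomorphism with Φ(e₁) = r and Φ(e₂) = r+1, i.e., Φ(x,y) = rx + (r+1)y. Then the restriction of Φ to the Lee sphere S_{2,r} is injective and its image is exactly the integer interval [−r(r+1), r(r+1)]; in particular |S_{2,r}| = 2r² + 2r + 1. -/
open Set

theorem hom_injective_on_sphere_dim_two (r : ℕ) (hr : 1 ≤ r)
    (Φ : (Fin 2 → ℤ) →+ ℤ)
    (h₁ : Φ (Pi.single 0 1) = (r : ℤ))
    (h₂ : Φ (Pi.single 1 1) = (r : ℤ) + 1) :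
    Set.InjOn Φ (leeSphere 2 r) ∧
    Φ '' leeSphere 2 r = Set.Icc (-((r : ℤ) * (r + 1))) ((r : ℤ) * (r + 1)) ∧
    sphereCard 2 r = 2 * r ^ 2 + 2 * r + 1 := by
  have key : ∀ x : Fin 2 → ℤ, Φ x = (r : ℤ) * x 0 + ((r : ℤ) + 1) * x 1 := by
    intro x
    have hx : x = x 0 • Pi.single 0 1 + x 1 • Pi.single 1 1 := by
      funext i
      fin_cases i <;> simp [Pi.single_apply]
    rw [hx, map_add, map_zsmul, map_zsmul, h₁, h₂]
    simp [smul_eq_mul]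
    ring
  have hmem : ∀ x : Fin 2 → ℤ, x ∈ leeSphere 2 r ↔ (x 0).natAbs + (x 1).natAbs ≤ r := by
    intro x
    simp [leeSphere, leeDist, Fin.sum_univ_two]
  -- injectivity
  have hinj : Set.InjOn Φ (leeSphere 2 r) := by
    intro x hx y hy hxy
    rw [hmem] at hx hy
    rw [key, key] at hxy
    have heq : ((r : ℤ) + 1) ∣ (r : ℤ) * (x 0 - y 0) := ⟨y 1 - x 1, by linarith⟩
    have hcop : IsCoprime ((r : ℤ) + 1) (r : ℤ) := ⟨1, -1, by ring⟩
    obtain ⟨k, hk⟩ := hcop.dvd_of_dvd_mul_left heq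
    have hk2 : y 1 - x 1 = (r : ℤ) * k := by
      have hr1 : ((r : ℤ) + 1) ≠ 0 := by positivity
      have h5 : ((r : ℤ) + 1) * (y 1 - x 1) = ((r : ℤ) + 1) * ((r : ℤ) * k) := by
        linear_combination (r : ℤ) * hk - hxy
      exact mul_left_cancel₀ hr1 h5
    have hk0 : k = 0 := by
      by_contra h
      have h1 : 1 ≤ k.natAbs := by omega
      have e1 : (x 0 - y 0).natAbs = (r + 1) * k.natAbs := by
        rw [hk, Int.natAbs_mul]
        congr 1
      have e2 : (y 1 - x 1).natAbs = r * k.natAbs := by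
        rw [hk2, Int.natAbs_mul]
        congr 1
      have t1 : (x 0 - y 0).natAbs ≤ (x 0).natAbs + (y 0).natAbs := Int.natAbs_sub_le _ _
      have t2 : (y 1 - x 1).natAbs ≤ (y 1).natAbs + (x 1).natAbs := Int.natAbs_sub_le _ _
      set K := k.natAbs with hK
      have hsum : (r + 1) * K + r * K = (2 * r + 1) * K := by ring
      have hge : (2 * r + 1) * 1 ≤ (2 * r + 1) * K := Nat.mul_le_mul_left _ h1
      linarith
    have e0 : x 0 = y 0 := by rw [hk0, mul_zero] at hk; linarith
    have e1 : x 1 = y 1 := by rw [hk0, mul_zero] at hk2; linarith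
    funext i
    fin_cases i <;> assumption
  have himg : Φ '' leeSphere 2 r = Set.Icc (-((r : ℤ) * (r + 1))) ((r : ℤ) * (r + 1)) := by
    apply Set.Subset.antisymm
    · rintro _ ⟨x, hx, rfl⟩
      rw [hmem] at hx
      rw [key]
      have h' : ((x 0).natAbs : ℤ) + ((x 1).natAbs : ℤ) ≤ (r : ℤ) := by exact_mod_cast hx
      have habs : |x 0| + |x 1| ≤ (r : ℤ) := by
        rw [Int.abs_eq_natAbs, Int.abs_eq_natAbs]; exact h'
      have a1 : x 0 ≤ |x 0| := le_abs_self _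
      have a2 : -|x 0| ≤ x 0 := neg_abs_le _
      have a3 : x 1 ≤ |x 1| := le_abs_self _
      have a4 : -|x 1| ≤ x 1 := neg_abs_le _
      have a5 : (0:ℤ) ≤ |x 0| := abs_nonneg _
      have a6 : (0:ℤ) ≤ |x 1| := abs_nonneg _
      have hr0 : (0:ℤ) ≤ (r:ℤ) := by positivity
      constructor
      · nlinarith
      · nlinarith
    · rintro m hm
      obtain ⟨hm1, hm2⟩ := hm
      by_cases hmx : m = (r : ℤ) * (r + 1)
      · refine ⟨(fun i => if i = 0 then 0 else (r : ℤ)), ?_, ?_⟩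
        · rw [hmem]; simp
        · rw [key]; simp; linarith [hmx]
      · have hrpos : (0:ℤ) < (r : ℤ) := by exact_mod_cast hr
        set q := m / (r : ℤ) with hq
        set t := m % (r : ℤ) with ht
        have hqt : (r : ℤ) * q + t = m := Int.mul_ediv_add_emod m r
        have ht0 : 0 ≤ t := Int.emod_nonneg m (by positivity)
        have ht1 : t < (r : ℤ) := Int.emod_lt_of_pos m hrpos
        have hql : -((r:ℤ) + 1) ≤ q := by nlinarith
        have hqu : q ≤ (r : ℤ) := by
          by_contra hcon
          push_neg at hcon
          have h5 : (r:ℤ) * ((r:ℤ) + 1) ≤ (r:ℤ) * q :=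
            mul_le_mul_of_nonneg_left (by linarith) (le_of_lt hrpos)
          have ht0' : t = 0 := by linarith
          exact hmx (by linarith)
        by_cases hc : 2 * t - (r : ℤ) ≤ q
        · refine ⟨(fun i => if i = 0 then q - t else t), ?_, ?_⟩
          · rw [hmem]; simp; omega
          · rw [key]; simp; linear_combination hqt
        · refine ⟨(fun i => if i = 0 then q + (r : ℤ) + 1 - t else t - (r : ℤ)), ?_, ?_⟩
          · rw [hmem]; simp; omega
          · rw [key]; simp; linear_combination hqt
  refine ⟨hinj, himg, ?_⟩
  have h1 : (leeSphere 2 r).ncard = (Set.Icc (-((r : ℤ) * (r + 1))) ((r : ℤ) * (r + 1))).ncard := by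
    rw [← himg, Set.ncard_image_of_injOn hinj]
  rw [sphereCard, h1, ← Finset.coe_Icc, Set.ncard_coe_finset, Int.card_Icc]
  have h2 : ((r : ℤ) * (r + 1) + 1 - -((r : ℤ) * (r + 1))) = ((2 * r ^ 2 + 2 * r + 1 : ℕ) : ℤ) := by
    push_cast; ring
  rw [h2, Int.toNat_natCast]
end

section
/- Fix r ≥ 1 and let k = 2r² + 2r + 1 = |S_{2,r}|. The group homomorphism φ : ℤ² → ℤ/kℤ determined by φ(e₁) = r and φ(e₂) = r+1 restricts to a bijection from the Lee sphere S_{2,r} onto ℤ/kℤ. Consequently the kernel of φ is a linear PL(2,r) code. -/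
open Set

/-- `L` is a perfect `e`-error-correcting Lee code `PL(n,e)`. -/
def IsPLCode {n : ℕ} (e : ℕ) (L : Set (Fin n → ℤ)) : Prop :=
  (∀ v ∈ L, ∀ w ∈ L, v ≠ w → 2 * e + 1 ≤ leeDist v w) ∧
  ∀ x : Fin n → ℤ, ∃! c, c ∈ L ∧ leeDist x c ≤ e

private lemma leeDist_eq (v w : Fin 2 → ℤ) :
    leeDist v w = (v 0 - w 0).natAbs + (v 1 - w 1).natAbs := by
  simp [leeDist, Fin.sum_univ_two]

private lemma mem_sphere_iff (r : ℕ) (v : Fin 2 → ℤ) :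
    v ∈ leeSphere 2 r ↔ (v 0).natAbs + (v 1).natAbs ≤ r := by
  simp [leeSphere, leeDist_eq]

private lemma zero_of_dvd (r k : ℕ) (hr : 1 ≤ r) (hk : k = 2 * r ^ 2 + 2 * r + 1)
    (u v : ℤ) (hb : u.natAbs + v.natAbs ≤ 2 * r)
    (hd : (k : ℤ) ∣ u * r + v * (r + 1)) : u = 0 ∧ v = 0 := by
  obtain ⟨m, hm⟩ := hd
  have hkz : (k : ℤ) = 2 * (r : ℤ) ^ 2 + 2 * r + 1 := by rw [hk]; push_cast; ring
  have hu' : (u.natAbs : ℤ) = |u| := Int.natCast_natAbs u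
  have hv' : (v.natAbs : ℤ) = |v| := Int.natCast_natAbs v
  have habs : |u| + |v| ≤ 2 * (r : ℤ) := by
    rw [← hu', ← hv']; exact_mod_cast hb
  have hrz : (1 : ℤ) ≤ (r : ℤ) := by exact_mod_cast hr
  have h1 : |u * (r : ℤ) + v * ((r : ℤ) + 1)| ≤ 2 * (r : ℤ) * ((r : ℤ) + 1) := by
    calc |u * (r : ℤ) + v * ((r : ℤ) + 1)| ≤ |u * (r : ℤ)| + |v * ((r : ℤ) + 1)| :=
          abs_add_le _ _
      _ = |u| * r + |v| * ((r : ℤ) + 1) := by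
          rw [abs_mul, abs_mul, abs_of_nonneg (by positivity : (0:ℤ) ≤ (r:ℤ)),
            abs_of_nonneg (by positivity : (0:ℤ) ≤ (r:ℤ) + 1)]
      _ ≤ 2 * (r : ℤ) * ((r : ℤ) + 1) := by nlinarith [abs_nonneg u, abs_nonneg v]
  have hkpos : (0 : ℤ) < k := by rw [hkz]; positivity
  have hlt : |(k : ℤ) * m| < k := by
    rw [← hm]
    calc |u * (r : ℤ) + v * ((r : ℤ) + 1)| ≤ 2 * (r : ℤ) * ((r : ℤ) + 1) := h1
      _ < k := by rw [hkz]; nlinarith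
  have hm0 : m = 0 := by
    rw [abs_mul, abs_of_nonneg hkpos.le] at hlt
    have h2 : |m| < 1 := by
      by_contra h
      push_neg at h
      nlinarith [abs_nonneg m]
    have := abs_lt.mp h2
    omega
  have he : u * (r : ℤ) + v * ((r : ℤ) + 1) = 0 := by rw [hm, hm0, mul_zero]
  set c : ℤ := -(u + v) with hc
  have hvr : v = (r : ℤ) * c := by rw [hc]; linear_combination he
  have h3 : (r : ℤ) * (u + c * ((r : ℤ) + 1)) = 0 := by
    linear_combination he - ((r : ℤ) + 1) * hvr
  have hrne : (r : ℤ) ≠ 0 := by omega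
  have hur : u = -c * ((r : ℤ) + 1) := by
    rcases mul_eq_zero.mp h3 with h | h
    · exact absurd h hrne
    · linarith
  have hrc : ((r : ℤ) + 1) = ((r + 1 : ℕ) : ℤ) := by push_cast; ring
  have hun : u.natAbs = c.natAbs * (r + 1) := by
    rw [hur, Int.natAbs_mul, Int.natAbs_neg, hrc, Int.natAbs_natCast]
  have hvn : v.natAbs = r * c.natAbs := by
    rw [hvr, Int.natAbs_mul, Int.natAbs_natCast]
  have hc0 : c.natAbs = 0 := by nlinarith [hb, hun, hvn]
  have : c = 0 := Int.natAbs_eq_zero.mp hc0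
  constructor
  · rw [hur, this]; ring
  · rw [hvr, this]; ring

private lemma core_rep (r : ℕ) (hr : 1 ≤ r) (t : ℤ) (h0 : 0 ≤ t)
    (h1 : t ≤ (r : ℤ) * ((r : ℤ) + 1)) :
    ∃ a b : ℤ, a.natAbs + b.natAbs ≤ r ∧ a * r + b * ((r : ℤ) + 1) = t := by
  have hrz : (1 : ℤ) ≤ (r : ℤ) := by exact_mod_cast hr
  rcases eq_or_lt_of_le h1 with heq | hlt
  · exact ⟨0, r, by simp, by rw [heq]; ring⟩
  · have hrpos : (0 : ℤ) < r := by linarith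
    set q := t / (r : ℤ) with hq
    set s := t % (r : ℤ) with hs
    have hs0 : 0 ≤ s := Int.emod_nonneg _ (by omega)
    have hs1 : s < r := Int.emod_lt_of_pos _ hrpos
    have ht : (r : ℤ) * q + s = t := Int.mul_ediv_add_emod t r
    have hq0 : 0 ≤ q := Int.ediv_nonneg h0 hrpos.le
    have hqr : q ≤ r := by nlinarith
    by_cases hcc : 2 * s ≤ (r : ℤ) + q
    · exact ⟨q - s, s, by omega, by linear_combination ht⟩
    · push_neg at hcc
      exact ⟨q - s + r + 1, s - r, by omega, by linear_combination ht⟩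

private lemma exists_rep (r k : ℕ) (hr : 1 ≤ r) (hk : k = 2 * r ^ 2 + 2 * r + 1)
    (t : ℤ) : ∃ a b : ℤ, a.natAbs + b.natAbs ≤ r ∧
      (k : ℤ) ∣ a * r + b * ((r : ℤ) + 1) - t := by
  have hkz : (k : ℤ) = 2 * (r : ℤ) ^ 2 + 2 * r + 1 := by rw [hk]; push_cast; ring
  have hkpos : (0 : ℤ) < k := by rw [hkz]; positivity
  set t0 := t % (k : ℤ) with ht0
  have h0 : 0 ≤ t0 := Int.emod_nonneg _ (by omega)
  have h1 : t0 < k := Int.emod_lt_of_pos _ hkpos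
  have hdt : (k : ℤ) ∣ t0 - t := ⟨-(t / k), by
    have := Int.mul_ediv_add_emod t (k : ℤ); linarith [this]⟩
  by_cases hcase : t0 ≤ (r : ℤ) * ((r : ℤ) + 1)
  · obtain ⟨a, b, hab, he⟩ := core_rep r hr t0 h0 hcase
    exact ⟨a, b, hab, by rw [he]; exact hdt⟩
  · push_neg at hcase
    have h2 : 0 ≤ (k : ℤ) - t0 := by linarith
    have h3 : (k : ℤ) - t0 ≤ (r : ℤ) * ((r : ℤ) + 1) := by rw [hkz]; nlinarith
    obtain ⟨a, b, hab, he⟩ := core_rep r hr ((k : ℤ) - t0) h2 h3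
    refine ⟨-a, -b, by simpa using hab, ?_⟩
    have : -a * (r : ℤ) + -b * ((r : ℤ) + 1) - t = (t0 - t) + (-1) * ((k : ℤ)) := by
      linear_combination -he
    rw [this]
    exact dvd_add hdt ⟨-1, by ring⟩

theorem perfect_code_dim_two (r : ℕ) (hr : 1 ≤ r)
    (k : ℕ) (hk : k = 2 * r ^ 2 + 2 * r + 1)
    (φ : (Fin 2 → ℤ) →+ ZMod k)
    (h₁ : φ (Pi.single 0 1) = (r : ZMod k))
    (h₂ : φ (Pi.single 1 1) = (r : ZMod k) + 1) :
    Set.BijOn φ (leeSphere 2 r) Set.univ ∧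
    IsPLCode r (φ.ker : Set (Fin 2 → ℤ)) := by
  have phi_eval : ∀ v : Fin 2 → ℤ,
      φ v = ((v 0 * r + v 1 * ((r : ℤ) + 1) : ℤ) : ZMod k) := by
    intro v
    have hv : v = v 0 • Pi.single 0 (1 : ℤ) + v 1 • Pi.single 1 (1 : ℤ) := by
      funext i; fin_cases i <;> simp
    conv_lhs => rw [hv]
    rw [map_add, map_zsmul, map_zsmul, h₁, h₂]
    push_cast [zsmul_eq_mul]
    ring
  have cast_eq_iff : ∀ a b : ℤ, ((a : ZMod k) = (b : ZMod k)) ↔ (k : ℤ) ∣ b - a := by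
    intro a b
    rw [ZMod.intCast_eq_intCast_iff, Int.modEq_iff_dvd]
  -- injectivity on the sphere
  have hinj : Set.InjOn φ (leeSphere 2 r) := by
    intro v hv w hw hvw
    rw [phi_eval v, phi_eval w] at hvw
    have hd := (cast_eq_iff _ _).mp hvw
    have hd' : (k : ℤ) ∣ (w 0 - v 0) * r + (w 1 - v 1) * ((r : ℤ) + 1) := by
      have heq : (w 0 - v 0) * (r : ℤ) + (w 1 - v 1) * ((r : ℤ) + 1) =
          (w 0 * r + w 1 * ((r : ℤ) + 1)) - (v 0 * r + v 1 * ((r : ℤ) + 1)) := by ring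
      rw [heq]; exact hd
    have hbv := (mem_sphere_iff r v).mp hv
    have hbw := (mem_sphere_iff r w).mp hw
    have hz := zero_of_dvd r k hr hk (w 0 - v 0) (w 1 - v 1) (by omega) hd'
    funext i
    fin_cases i
    · show v 0 = w 0; omega
    · show v 1 = w 1; omega
  -- surjectivity onto univ
  have hsurj : Set.SurjOn φ (leeSphere 2 r) Set.univ := by
    intro c _
    obtain ⟨t, ht⟩ := ZMod.intCast_surjective (n := k) c
    obtain ⟨a, b, hab, hdvd⟩ := exists_rep r k hr hk t
    refine ⟨![a, b], ?_, ?_⟩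
    · rw [mem_sphere_iff]
      simpa using hab
    · rw [phi_eval]
      have h0 : (![a, b] : Fin 2 → ℤ) 0 = a := rfl
      have h1' : (![a, b] : Fin 2 → ℤ) 1 = b := rfl
      rw [h0, h1', ← ht]
      rw [cast_eq_iff]
      have heq : t - (a * (r : ℤ) + b * ((r : ℤ) + 1)) =
          -((a * (r : ℤ) + b * ((r : ℤ) + 1)) - t) := by ring
      rw [heq]
      exact dvd_neg.mpr hdvd
  refine ⟨⟨fun v _ => trivial, hinj, hsurj⟩, ?_, ?_⟩
  -- minimum distance
  · intro v hv w hw hne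
    by_contra hlt
    push_neg at hlt
    have hdist : leeDist v w ≤ 2 * r := by omega
    rw [leeDist_eq] at hdist
    have hv0 : φ v = 0 := hv
    have hw0 : φ w = 0 := hw
    have hvw : φ v = φ w := by rw [hv0, hw0]
    rw [phi_eval v, phi_eval w] at hvw
    have hd := (cast_eq_iff _ _).mp hvw
    have hd' : (k : ℤ) ∣ (w 0 - v 0) * r + (w 1 - v 1) * ((r : ℤ) + 1) := by
      have heq : (w 0 - v 0) * (r : ℤ) + (w 1 - v 1) * ((r : ℤ) + 1) =
          (w 0 * r + w 1 * ((r : ℤ) + 1)) - (v 0 * r + v 1 * ((r : ℤ) + 1)) := by ring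
      rw [heq]; exact hd
    have hz := zero_of_dvd r k hr hk (w 0 - v 0) (w 1 - v 1) (by omega) hd'
    apply hne
    funext i
    fin_cases i
    · show v 0 = w 0; omega
    · show v 1 = w 1; omega
  -- perfect covering
  · intro x
    obtain ⟨s, hs, hφs⟩ := hsurj (Set.mem_univ (φ x))
    refine ⟨x - s, ⟨?_, ?_⟩, ?_⟩
    · show φ (x - s) = 0
      rw [map_sub, hφs, sub_self]
    · rw [leeDist_eq]
      have hsb := (mem_sphere_iff r s).mp hs
      have e0 : x 0 - (x - s) 0 = s 0 := by simp
      have e1 : x 1 - (x - s) 1 = s 1 := by simp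
      rw [e0, e1]
      exact hsb
    · rintro c ⟨hcker, hcd⟩
      have hcs : x - c ∈ leeSphere 2 r := by
        rw [mem_sphere_iff]
        rw [leeDist_eq] at hcd
        simpa using hcd
      have hφc : φ c = 0 := hcker
      have hφxc : φ (x - c) = φ s := by
        rw [map_sub, hφc, sub_zero, hφs]
      have := hinj hcs hs hφxc
      have hc : c = x - (x - c) := by abel
      rw [hc, this]
end

section
/- Let G be a finite abelian group and φ : ℤ^n → G a group homomorphism whose restriction to the Lee sphere S_{n,e} is injective and whose restriction to S_{n,e+1} is surjective. Then the kernel of φ is a linear QPL(n,e) code. -/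
/-!
The Lee metric on `ℤ^n` is geodesic: two words at distance at most `2e` have a midpoint
within `e` of both. Translating two such codewords by the midpoint gives two distinct words of
`S_{n,e}` with the same image under `φ`, contradicting injectivity. Covering radius `e + 1` is
immediate: if `y ∈ S_{n,e+1}` has `φ y = φ x`, then `x - y` is a codeword at distance
`|y| ≤ e + 1` from `x`.
-/

open Set

/-- `L` is a quasi-perfect `e`-error-correcting Lee code `QPL(n,e)`. -/
def IsQPLCode {n : ℕ} (e : ℕ) (L : Set (Fin n → ℤ)) : Prop :=
  (∀ v ∈ L, ∀ w ∈ L, v ≠ w → 2 * e + 1 ≤ leeDist v w) ∧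
  ∀ x : Fin n → ℤ, ∃ c ∈ L, leeDist x c ≤ e + 1

lemma Int.exists_natAbs_eq_min_and_natAbs_sub_eq (t : ℤ) (a : ℕ) :
    ∃ s : ℤ, s.natAbs = min t.natAbs a ∧ (t - s).natAbs = t.natAbs - a := by
  rcases le_or_gt 0 t with h | h
  · exact ⟨min t a, by omega, by omega⟩
  · exact ⟨-min (-t) a, by omega, by omega⟩

lemma leeDist_comm {n : ℕ} (v w : Fin n → ℤ) : leeDist v w = leeDist w v := by
  simp only [leeDist, ← Int.natAbs_neg (v _ - w _), neg_sub]

lemma leeDist_sub_right {n : ℕ} (u v w : Fin n → ℤ) : leeDist (v - u) (w - u) = leeDist v w := by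
  simp only [leeDist, Pi.sub_apply, sub_sub_sub_cancel_right]

lemma leeDist_sub_zero {n : ℕ} (v w : Fin n → ℤ) : leeDist (v - w) 0 = leeDist v w := by
  simp only [leeDist, Pi.sub_apply, Pi.zero_apply, sub_zero]

lemma leeDist_succ {n : ℕ} (v w : Fin (n + 1) → ℤ) :
    leeDist v w = (v 0 - w 0).natAbs + leeDist (Fin.tail v) (Fin.tail w) :=
  Fin.sum_univ_succ _

-- Greedy, coordinate by coordinate: the first coordinate of `y` uses up as much of `a` as it can.
lemma exists_leeDist_zero_le_and_leeDist_le {n : ℕ} (x : Fin n → ℤ) (a b : ℕ)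
    (hx : leeDist x 0 ≤ a + b) : ∃ y, leeDist y 0 ≤ a ∧ leeDist x y ≤ b := by
  induction n generalizing a b with
  | zero => exact ⟨0, by simp [leeDist], by simp [leeDist]⟩
  | succ n ih =>
    obtain ⟨s, hs, hts⟩ := Int.exists_natAbs_eq_min_and_natAbs_sub_eq (x 0) a
    have htail_zero : Fin.tail (0 : Fin (n + 1) → ℤ) = 0 := rfl
    rw [leeDist_succ, htail_zero, Pi.zero_apply, sub_zero] at hx
    obtain ⟨y, hya, hyb⟩ :=
      ih (Fin.tail x) (a - (x 0).natAbs) (b - ((x 0).natAbs - a)) (by omega)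
    refine ⟨Fin.cons s y, ?_, ?_⟩
    · rw [leeDist_succ, htail_zero, Fin.cons_zero, Fin.tail_cons, Pi.zero_apply, sub_zero]
      omega
    · rw [leeDist_succ, Fin.cons_zero, Fin.tail_cons]
      omega

lemma exists_leeDist_le_and_leeDist_le {n : ℕ} (x z : Fin n → ℤ) (a b : ℕ)
    (hxz : leeDist x z ≤ a + b) : ∃ y, leeDist x y ≤ a ∧ leeDist y z ≤ b := by
  obtain ⟨y, hyb, hya⟩ := exists_leeDist_zero_le_and_leeDist_le (x - z) b a
    (by rwa [leeDist_sub_zero, add_comm])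
  refine ⟨y + z, ?_, ?_⟩
  · rwa [← leeDist_sub_right z, add_sub_cancel_right]
  · rwa [← leeDist_sub_zero, add_sub_cancel_right]

section

variable {n e : ℕ} {G : Type*} [AddGroup G] (φ : (Fin n → ℤ) →+ G)

/-- Two codewords at distance at most `2e` are joined through a midpoint `y` within `e` of
both; translating by `-y` gives two words of the sphere `S_{n,e}` with the same image. -/
lemma two_mul_add_one_le_leeDist_of_injOn (hinj : InjOn φ (leeSphere n e))
    {v w : Fin n → ℤ} (hv : v ∈ φ.ker) (hw : w ∈ φ.ker) (hvw : v ≠ w) :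
    2 * e + 1 ≤ leeDist v w := by
  by_contra! hclose
  obtain ⟨y, hvy, hyw⟩ := exists_leeDist_le_and_leeDist_le v w e e (by omega)
  have hv' : v - y ∈ leeSphere n e := (leeDist_sub_zero v y).trans_le hvy
  have hw' : w - y ∈ leeSphere n e := (leeDist_sub_zero w y).trans_le (leeDist_comm w y ▸ hyw)
  have himage : φ (v - y) = φ (w - y) := by
    rw [map_sub, map_sub, AddMonoidHom.mem_ker.mp hv, AddMonoidHom.mem_ker.mp hw]
  exact hvw (sub_left_injective (hinj hv' hw' himage))

lemma exists_mem_ker_leeDist_le_of_surjOn (hsurj : SurjOn φ (leeSphere n (e + 1)) univ)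
    (x : Fin n → ℤ) : ∃ c ∈ φ.ker, leeDist x c ≤ e + 1 := by
  obtain ⟨y, hy, hyx⟩ := hsurj (mem_univ (φ x))
  refine ⟨x - y, by rw [AddMonoidHom.mem_ker, map_sub, hyx, sub_self], ?_⟩
  rwa [← leeDist_sub_right (x - y), sub_self, sub_sub_cancel]

end

theorem ker_is_QPL_general (n e : ℕ)
    (G : Type) [AddCommGroup G]
    (φ : (Fin n → ℤ) →+ G)
    (hinj : Set.InjOn φ (leeSphere n e))
    (hsurj : Set.SurjOn φ (leeSphere n (e + 1)) Set.univ) :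
    IsQPLCode e (φ.ker : Set (Fin n → ℤ)) :=
  ⟨fun _ hv _ hw hvw => two_mul_add_one_le_leeDist_of_injOn φ hinj hv hw hvw,
    exists_mem_ker_leeDist_le_of_surjOn φ hsurj⟩

theorem ker_is_QPL (n e : ℕ)
    (G : Type) [AddCommGroup G] [Fintype G]
    (φ : (Fin n → ℤ) →+ G)
    (hinj : Set.InjOn φ (leeSphere n e))
    (hsurj : Set.SurjOn φ (leeSphere n (e + 1)) Set.univ) :
    IsQPLCode e (φ.ker : Set (Fin n → ℤ)) :=
  ker_is_QPL_general n e G φ hinj hsurj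
end

section
/- For every e ≥ 1 and every k with |S_{2,e}| ≤ k < |S_{2,e+1}|, there exists a subgroup L of ℤ² that is a linear QPL(2,e) code, has index k in ℤ², and satisfies k·ℤ² ⊆ L (so L is k-periodic and induces a linear QPL(2,e,k) code over the alphabet ℤ/kℤ). -/
open Set

/-! The code is the kernel of `x ↦ c x₀ - (c + 1) x₁ (mod k)` for a slope `c ∈ {e, e + 1}`.
When `c ≤ ρ`, vectors of Lee weight at most `ρ` realise every integer `m` with
`|m| ≤ ρ (c + 1)`, hence every residue once `k ≤ 2ρ(c + 1) + 1`; with `ρ = e + 1` this is the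
covering radius. A nonzero kernel vector of weight `≤ 2e ≤ 2c` would satisfy
`c x₀ = (c + 1) x₁` in `ℤ`, because `|c x₀ - (c + 1) x₁| ≤ 2e(c + 1) < k`, so it would be a
multiple of `(c + 1, c)`, whose weight `2c + 1` is too large. For `c = ρ = r` and `k = 2r(r + 1) + 1` both facts say
that the map is a bijection from `S_{2,r}` onto `ℤ/kℤ`, which computes `|S_{2,r}|`. -/

lemma exists_abs_add_abs_le_of_abs_le {c ρ m : ℤ} (hc : 0 ≤ c) (hcρ : c ≤ ρ)
    (hm : |m| ≤ ρ * (c + 1)) :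
    ∃ a b : ℤ, |a| + |b| ≤ ρ ∧ c * a - (c + 1) * b = m := by
  wlog hm0 : 0 ≤ m generalizing m
  · obtain ⟨a, b, hab, heq⟩ := this (m := -m) (by rwa [abs_neg]) (by linarith)
    exact ⟨-a, -b, by rwa [abs_neg, abs_neg], by linarith⟩
  rw [abs_of_nonneg hm0] at hm
  obtain ⟨q, s, hs0, hsc, rfl⟩ : ∃ q s : ℤ, 0 ≤ s ∧ s ≤ c ∧ m = (c + 1) * q - s :=
    ⟨-(-m / (c + 1)), -m % (c + 1), Int.emod_nonneg _ (by omega),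
      by have := Int.emod_lt_of_pos (-m) (by omega : 0 < c + 1); omega,
      by have := Int.mul_ediv_add_emod (-m) (c + 1); linarith⟩
  have hq0 : 0 ≤ q := by nlinarith
  have hqρ : q ≤ ρ := by nlinarith
  -- The two representations below cost `s + |s - q|` and `(c + 1 - s) + (q + c - s)`;
  -- when `s > q` these add up to `2c + 1`, so one of them is at most `c ≤ ρ`.
  by_cases h : s + |s - q| ≤ ρ
  · exact ⟨s, s - q, by rwa [abs_of_nonneg hs0], by ring⟩
  · have hqs : q < s := by
      by_contra! hsq
      rw [abs_of_nonpos (by linarith)] at h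
      linarith
    refine ⟨s - (c + 1), s - q - c, ?_, by ring⟩
    rw [abs_of_pos (by linarith : 0 < s - q)] at h
    rw [abs_of_neg (by linarith), abs_of_nonpos (by linarith)]
    linarith

lemma eq_zero_of_dvd_of_abs_add_abs_le {e c k x y : ℤ} (hec : e ≤ c)
    (hk : 2 * e * (c + 1) < k) (hdvd : k ∣ c * x - (c + 1) * y) (hxy : |x| + |y| ≤ 2 * e) :
    x = 0 ∧ y = 0 := by
  have he : 0 ≤ e := by linarith [abs_nonneg x, abs_nonneg y]
  have hlt : |c * x - (c + 1) * y| < k :=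
    calc |c * x - (c + 1) * y| ≤ |c * x| + |(c + 1) * y| := abs_sub _ _
      _ = c * |x| + (c + 1) * |y| := by
        rw [abs_mul, abs_mul, abs_of_nonneg (by linarith : 0 ≤ c),
          abs_of_nonneg (by linarith : 0 ≤ c + 1)]
      _ ≤ (c + 1) * (2 * e) := by nlinarith [abs_nonneg x]
      _ < k := by linarith
  have hcx : c * x = (c + 1) * y := by linarith [Int.eq_zero_of_abs_lt_dvd hdvd hlt]
  obtain ⟨t, rfl⟩ : c + 1 ∣ x :=
    (show IsCoprime (c + 1) c from ⟨1, -1, by ring⟩).dvd_of_dvd_mul_left ⟨y, hcx⟩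
  obtain rfl : y = c * t := by
    have : (c + 1) * (y - c * t) = 0 := by linarith
    linarith [(mul_eq_zero.mp this).resolve_left (by linarith)]
  have : (2 * c + 1) * |t| ≤ 2 * c := by
    rw [abs_mul, abs_mul, abs_of_nonneg (by linarith : 0 ≤ c + 1),
      abs_of_nonneg (by linarith : 0 ≤ c)] at hxy
    linarith
  have ht : t = 0 := abs_eq_zero.mp (by nlinarith [abs_nonneg t])
  simp [ht]

lemma leeDist_eq_leeDist_sub_zero {n : ℕ} (v w : Fin n → ℤ) :
    leeDist v w = leeDist (v - w) 0 := by
  simp [leeDist]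

lemma leeDist_sub_zero_le {n : ℕ} (v w : Fin n → ℤ) :
    leeDist (v - w) 0 ≤ leeDist v 0 + leeDist w 0 := by
  simp only [leeDist, Pi.sub_apply, Pi.zero_apply, sub_zero, ← Finset.sum_add_distrib]
  exact Finset.sum_le_sum fun i _ => Int.natAbs_sub_le _ _

lemma natCast_leeDist_zero (v : Fin 2 → ℤ) : (leeDist v 0 : ℤ) = |v 0| + |v 1| := by
  simp [leeDist, Fin.sum_univ_two]

def codeMap (c k : ℕ) : (Fin 2 → ℤ) →+ ZMod k :=
  AddMonoidHom.mk' (fun x => ((c * x 0 - (c + 1) * x 1 : ℤ) : ZMod k)) fun x y => by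
    simp only [Pi.add_apply]
    push_cast
    ring

lemma codeMap_apply (c k : ℕ) (x : Fin 2 → ℤ) :
    codeMap c k x = ((c * x 0 - (c + 1) * x 1 : ℤ) : ZMod k) := rfl

lemma codeMap_surjective (c k : ℕ) : Function.Surjective (codeMap c k) := by
  intro z
  obtain ⟨t, rfl⟩ := ZMod.intCast_surjective z
  exact ⟨fun _ => -t, by rw [codeMap_apply]; congr 1; ring⟩

lemma index_ker_codeMap (c k : ℕ) : (codeMap c k).ker.index = k := by
  rw [AddSubgroup.index_ker, AddMonoidHom.range_eq_top.mpr (codeMap_surjective c k),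
    AddSubgroup.card_top, Nat.card_zmod]

lemma eq_zero_of_codeMap_eq_zero {e c k : ℕ} (hec : e ≤ c) (hk : 2 * e * (c + 1) < k)
    {v : Fin 2 → ℤ} (hv : codeMap c k v = 0) (hd : leeDist v 0 ≤ 2 * e) : v = 0 := by
  rw [codeMap_apply, ZMod.intCast_zmod_eq_zero_iff_dvd] at hv
  have hd' : |v 0| + |v 1| ≤ 2 * (e : ℤ) := by
    rw [← natCast_leeDist_zero]; exact_mod_cast hd
  obtain ⟨h0, h1⟩ := eq_zero_of_dvd_of_abs_add_abs_le (by exact_mod_cast hec)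
    (by exact_mod_cast hk) hv hd'
  ext i
  fin_cases i <;> simp [h0, h1]

lemma exists_leeDist_le_codeMap_eq {c ρ k : ℕ} [NeZero k] (hcρ : c ≤ ρ)
    (hk : k ≤ 2 * ρ * (c + 1) + 1) (z : ZMod k) :
    ∃ v : Fin 2 → ℤ, leeDist v 0 ≤ ρ ∧ codeMap c k v = z := by
  have hm : |z.valMinAbs| ≤ ρ * (c + 1) := by
    have := z.natAbs_valMinAbs_le
    rw [Int.abs_eq_natAbs]
    have h2 : k / 2 ≤ ρ * (c + 1) := by
      rw [Nat.div_le_iff_le_mul_add_pred two_pos, ← mul_assoc]; omega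
    exact_mod_cast this.trans h2
  obtain ⟨a, b, hab, heq⟩ :=
    exists_abs_add_abs_le_of_abs_le (by positivity) (by exact_mod_cast hcρ) hm
  refine ⟨![a, b], ?_, ?_⟩
  · have : (leeDist ![a, b] 0 : ℤ) ≤ ρ := by rw [natCast_leeDist_zero]; simpa using hab
    exact_mod_cast this
  · simp [codeMap_apply, heq, ZMod.coe_valMinAbs]

lemma isQPLCode_ker_codeMap {e c k : ℕ} (hec : e ≤ c) (hce : c ≤ e + 1)
    (hmin : 2 * e * (c + 1) < k) (hcov : k ≤ 2 * (e + 1) * (c + 1) + 1) :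
    IsQPLCode e ((codeMap c k).ker : Set (Fin 2 → ℤ)) := by
  have : NeZero k := ⟨by omega⟩
  refine ⟨fun v hv w hw hne => ?_, fun x => ?_⟩
  · by_contra! hlt
    rw [leeDist_eq_leeDist_sub_zero] at hlt
    have hvw : codeMap c k (v - w) = 0 := by
      rw [map_sub, (codeMap c k).mem_ker.mp hv, (codeMap c k).mem_ker.mp hw, sub_zero]
    exact hne (sub_eq_zero.mp (eq_zero_of_codeMap_eq_zero hec hmin hvw (by omega)))
  · obtain ⟨v, hv, hxv⟩ := exists_leeDist_le_codeMap_eq hce hcov (codeMap c k x)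
    refine ⟨x - v, ?_, by rwa [leeDist_eq_leeDist_sub_zero, sub_sub_cancel]⟩
    rw [SetLike.mem_coe, AddMonoidHom.mem_ker, map_sub, hxv, sub_self]

lemma sphereCard_two (r : ℕ) : sphereCard 2 r = 2 * r * (r + 1) + 1 := by
  set K := 2 * r * (r + 1) + 1
  have : NeZero K := ⟨by omega⟩
  have hbij : Set.BijOn (codeMap r K) (leeSphere 2 r) Set.univ := by
    refine ⟨Set.mapsTo_univ _ _, fun v hv w hw hvw => ?_, fun z _ => ?_⟩
    · have hv : leeDist v 0 ≤ r := hv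
      have hw : leeDist w 0 ≤ r := hw
      refine sub_eq_zero.mp
        (eq_zero_of_codeMap_eq_zero (le_refl r) (Nat.lt_succ_self _ : _ < K) ?_ ?_)
      · rw [map_sub, hvw, sub_self]
      · linarith [leeDist_sub_zero_le v w]
    · exact exists_leeDist_le_codeMap_eq le_rfl le_rfl z
  rw [sphereCard, hbij.ncard_eq, Set.ncard_univ, Nat.card_zmod]

theorem linear_QPL_dim_two_periodic_general (e : ℕ)
    (k : ℕ) (hk₁ : sphereCard 2 e ≤ k) (hk₂ : k < sphereCard 2 (e + 1)) :
    ∃ L : AddSubgroup (Fin 2 → ℤ),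
      IsQPLCode e (L : Set (Fin 2 → ℤ)) ∧
      L.index = k ∧
      ∀ x : Fin 2 → ℤ, (k : ℤ) • x ∈ L := by
  rw [sphereCard_two] at hk₁ hk₂
  -- Slope `c = e` covers the lower half of the range of `k`, slope `c = e + 1` the upper half.
  obtain ⟨c, hec, hce, hmin, hcov⟩ : ∃ c, e ≤ c ∧ c ≤ e + 1 ∧
      2 * e * (c + 1) < k ∧ k ≤ 2 * (e + 1) * (c + 1) + 1 := by
    by_cases hk : k ≤ 2 * (e + 1) * (e + 1) + 1
    · exact ⟨e, le_rfl, by omega, by linarith, hk⟩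
    · exact ⟨e + 1, by omega, le_rfl, by nlinarith, by nlinarith⟩
  refine ⟨(codeMap c k).ker, isQPLCode_ker_codeMap hec hce hmin hcov, index_ker_codeMap c k,
    fun x => ?_⟩
  rw [AddMonoidHom.mem_ker, map_zsmul, natCast_zsmul, nsmul_eq_mul, ZMod.natCast_self, zero_mul]

theorem linear_QPL_dim_two_periodic (e : ℕ) (he : 1 ≤ e)
    (k : ℕ) (hk₁ : sphereCard 2 e ≤ k) (hk₂ : k < sphereCard 2 (e + 1)) :
    ∃ L : AddSubgroup (Fin 2 → ℤ),
      IsQPLCode e (L : Set (Fin 2 → ℤ)) ∧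
      L.index = k ∧
      ∀ x : Fin 2 → ℤ, (k : ℤ) • x ∈ L :=
  linear_QPL_dim_two_periodic_general e k hk₁ hk₂
end

section
/- For each n > 2, the set of integers e ≥ 1 for which there exists a linear QPL(n,e) code is finite. -/
open Set

/-! Since `0` is a codeword, every point `x ≥ 2` of the face `∑ x = e + 2` of the Lee sphere of
radius `e + 2` about `0` is covered by a codeword `c ≥ x - 1` with `∑ c ≤ 2e + 3`; call these
tiles. Two distinct tiles are `2e + 1` apart, hence `∑ min (c, c') ≤ e + 2`, and they fit in a box
of side about `2e`, so there are at most `(4n)ⁿ` of them. In a two-dimensional slice of the face,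
each row is either covered by a single tile or contains the boundary between two tiles, and the
latter forces a tile whose top lies just above that row. Rows of the second kind are therefore
boundedly many, while rows of the first kind can only fill a window `[a, 2a + 3n]`; hence the slice,
whose number of rows grows with `e`, forces `e` to be bounded. -/

open Finset

lemma leeDist_cast {n : ℕ} (v w : Fin n → ℤ) : (leeDist v w : ℤ) = ∑ l, |v l - w l| := by
  simp [leeDist]

lemma sub_one_le_of_abs_add_abs_sub_le {a b : ℤ} (ha : 2 ≤ a) (h : |a| + |a - b| ≤ |b| + 2) :
    a - 1 ≤ b := by
  grind [abs_of_nonneg, abs_of_neg]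

lemma min_add_min_eq_add_sub_abs_sub {α : Type*} [AddCommGroup α] [LinearOrder α]
    [IsOrderedAddMonoid α] (a b : α) : min a b + min a b = a + b - |a - b| := by
  rw [← min_add_max a b, ← max_sub_min_eq_abs' a b]
  abel

lemma eq_of_forall_eq_add_one {α : Type*} (f : ℤ → α) {a b : ℤ} (hab : a ≤ b)
    (h : ∀ τ, a ≤ τ → τ < b → f τ = f (τ + 1)) : f a = f b := by
  induction b, hab using Int.leInduction with
  | base => rfl
  | succ b hab ih => rw [ih fun τ h₁ h₂ => h τ h₁ (by omega), h b hab (by omega)]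

lemma add_add_add_le_sum {n : ℕ} {f : Fin n → ℤ} (hf : ∀ l, 1 ≤ f l) {i j k : Fin n}
    (hij : i ≠ j) (hik : i ≠ k) (hjk : j ≠ k) : f i + f j + f k + (n - 3) ≤ ∑ l, f l := by
  have h : ∑ l ∈ {i, j, k}, (f l - 1) ≤ ∑ l, (f l - 1) :=
    sum_le_univ_sum_of_nonneg fun l => by linarith [hf l]
  rw [sum_insert (by simp [hij, hik]), sum_insert (by simp [hjk]), sum_singleton,
    sum_sub_distrib] at h
  simp only [sum_const, card_univ, Fintype.card_fin, nsmul_eq_mul, mul_one] at h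
  linarith

/-- Points at Lee distance more than `n (d - 1)` from each other lie in distinct cubes of side
`d`, and the box `[0, q d)ⁿ` consists of `qⁿ` such cubes. -/
lemma card_le_pow_of_lt_leeDist {n d q : ℕ} (hd : 0 < d) (S : Finset (Fin n → ℤ))
    (hbox : ∀ x ∈ S, ∀ l, 0 ≤ x l ∧ x l < q * d)
    (hsep : ∀ x ∈ S, ∀ y ∈ S, x ≠ y → n * (d - 1) < leeDist x y) : #S ≤ q ^ n := by
  have hd' : (0 : ℤ) < d := by exact_mod_cast hd
  let cube : (Fin n → ℤ) → Fin n → ℤ := fun x l => x l / d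
  have hmaps : Set.MapsTo cube S ↑(Fintype.piFinset fun _ : Fin n => Ico (0 : ℤ) q) := by
    intro x hx
    simp only [Fintype.coe_piFinset, Set.mem_pi, Set.mem_univ, coe_Ico,
      Set.mem_Ico, true_implies, cube]
    exact fun l => ⟨Int.ediv_nonneg (hbox x hx l).1 hd'.le,
      Int.ediv_lt_of_lt_mul hd' (hbox x hx l).2⟩
  have hinj : Set.InjOn cube S := by
    intro x hx y hy hxy
    by_contra hne
    have hclose : ∀ l, |x l - y l| ≤ d - 1 := fun l => by
      have hq : (d : ℤ) * (x l / d) = d * (y l / d) := congrArg _ (congrFun hxy l)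
      rw [abs_le]
      constructor <;> linarith [Int.emod_add_mul_ediv (x l) d, Int.emod_add_mul_ediv (y l) d,
        Int.emod_nonneg (x l) hd'.ne', Int.emod_nonneg (y l) hd'.ne',
        Int.emod_lt_of_pos (x l) hd', Int.emod_lt_of_pos (y l) hd']
    have hsum : (leeDist x y : ℤ) ≤ n * (d - 1) := by
      rw [leeDist_cast]
      calc _ ≤ ∑ _l : Fin n, ((d : ℤ) - 1) := sum_le_sum fun l _ => hclose l
        _ = n * (d - 1) := by simp [mul_sub]
    have := hsep x hx y hy hne
    have : (n : ℤ) * (d - 1 : ℕ) < leeDist x y := by exact_mod_cast this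
    push_cast [Nat.one_le_iff_ne_zero.mpr hd.ne'] at this
    linarith
  simpa using card_le_card_of_injOn cube hmaps hinj

/-- The codewords that can cover a point of the positive face of the Lee sphere of radius
`e + 2` about the codeword `0`. -/
def IsTile {n : ℕ} (L : Set (Fin n → ℤ)) (e : ℕ) (c : Fin n → ℤ) : Prop :=
  c ∈ L ∧ (∀ l, 1 ≤ c l) ∧ ∑ l, c l ≤ 2 * (e : ℤ) + 3

namespace IsQPLCode

variable {n e : ℕ} {L : Set (Fin n → ℤ)}

lemma le_sum_abs_sub (hL : IsQPLCode e L) {c c' : Fin n → ℤ} (hc : c ∈ L) (hc' : c' ∈ L)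
    (hne : c ≠ c') : 2 * (e : ℤ) + 1 ≤ ∑ l, |c l - c' l| := by
  rw [← leeDist_cast]
  exact_mod_cast hL.1 c hc c' hc' hne

lemma exists_sum_abs_sub_le (hL : IsQPLCode e L) (x : Fin n → ℤ) :
    ∃ c ∈ L, ∑ l, |x l - c l| ≤ e + 1 := by
  obtain ⟨c, hc, hxc⟩ := hL.2 x
  exact ⟨c, hc, by rw [← leeDist_cast]; exact_mod_cast hxc⟩

/-- Since `0 ∈ L`, a codeword `c` covering `x` has `|c| ≥ 2e + 1`, so the triangle inequality
`|c| ≤ |x| + |x - c|` has slack at most `2`, and so has each of its coordinates. -/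
lemma exists_tile_ge (hL : IsQPLCode e L) (h0 : 0 ∈ L) {x : Fin n → ℤ} (hx : ∀ l, 2 ≤ x l)
    (hsum : ∑ l, x l = e + 2) : ∃ c, IsTile L e c ∧ ∀ l, x l - 1 ≤ c l := by
  obtain ⟨c, hc, hxc⟩ := hL.exists_sum_abs_sub_le x
  have hx_abs : ∑ l, |x l| = e + 2 := by
    rw [← hsum]
    exact sum_congr rfl fun l _ => abs_of_nonneg (by linarith [hx l])
  have hc0 : c ≠ 0 := by
    rintro rfl
    simp only [Pi.zero_apply, sub_zero, hx_abs] at hxc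
    linarith
  have hc_abs : 2 * (e : ℤ) + 1 ≤ ∑ l, |c l| := by
    simpa using hL.le_sum_abs_sub hc h0 hc0
  have htri : ∀ l, |c l| ≤ |x l| + |x l - c l| := fun l => by
    linarith [abs_sub_abs_le_abs_sub (c l) (x l), abs_sub_comm (c l) (x l)]
  have hslack : ∑ l, (|x l| + |x l - c l| - |c l|) ≤ 2 := by
    simp only [sum_sub_distrib, sum_add_distrib]
    linarith
  have hge : ∀ l, x l - 1 ≤ c l := fun l => by
    have := (single_le_sum (fun l _ => by linarith [htri l]) (mem_univ l)).trans hslack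
    exact sub_one_le_of_abs_add_abs_sub_le (hx l) (by linarith)
  have hpos : ∀ l, 1 ≤ c l := fun l => by linarith [hge l, hx l]
  refine ⟨c, ⟨hc, hpos, ?_⟩, hge⟩
  calc ∑ l, c l = ∑ l, |c l| := sum_congr rfl fun l _ => (abs_of_pos (hpos l)).symm
    _ ≤ ∑ l, (|x l| + |x l - c l|) := sum_le_sum fun l _ => htri l
    _ ≤ 2 * e + 3 := by rw [sum_add_distrib]; linarith

lemma sum_min_le (hL : IsQPLCode e L) {c c' : Fin n → ℤ} (hc : IsTile L e c)
    (hc' : IsTile L e c') (hne : c ≠ c') : ∑ l, min (c l) (c' l) ≤ e + 2 := by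
  have h := hL.le_sum_abs_sub hc.1 hc'.1 hne
  have h2 : ∑ l, (min (c l) (c' l) + min (c l) (c' l)) =
      ∑ l, c l + ∑ l, c' l - ∑ l, |c l - c' l| := by
    simp only [min_add_min_eq_add_sub_abs_sub, sum_sub_distrib, sum_add_distrib]
  rw [sum_add_distrib] at h2
  linarith [hc.2.2, hc'.2.2]

section Face

/-! Fix three coordinates `i, j, k`. The face points `x` with `x ≥ 2` and `x_l = 2` off
`i, j, k` are organised in rows: row `σ` consists of the points with `x_k = σ + 2`,
and `τ` indexes the points in a row by `x_i = τ + 2`. -/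

variable {i j k : Fin n}

lemma min_add_min_add_min_le (hL : IsQPLCode e L) (hij : i ≠ j) (hik : i ≠ k) (hjk : j ≠ k)
    {c c' : Fin n → ℤ} (hc : IsTile L e c) (hc' : IsTile L e c') (hne : c ≠ c') :
    min (c i) (c' i) + min (c j) (c' j) + min (c k) (c' k) ≤ e + 5 - n := by
  have := add_add_add_le_sum (f := fun l => min (c l) (c' l))
    (fun l => le_min (hc.2.1 l) (hc'.2.1 l)) hij hik hjk
  linarith [hL.sum_min_le hc hc' hne]

lemma exists_tile_row (hL : IsQPLCode e L) (h0 : 0 ∈ L) (hij : i ≠ j) (hik : i ≠ k)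
    (hjk : j ≠ k) {τ σ : ℤ} (hτ : 0 ≤ τ) (hσ : 0 ≤ σ) (hτσ : τ + σ ≤ e + 2 - 2 * n) :
    ∃ c, IsTile L e c ∧ τ + 1 ≤ c i ∧ e + 3 - 2 * n - τ - σ ≤ c j ∧ σ + 1 ≤ c k := by
  classical
  let x : Fin n → ℤ := 2 + Pi.single i τ + Pi.single j (e + 2 - 2 * n - τ - σ) + Pi.single k σ
  have hx : ∀ l, 2 ≤ x l := fun l => by
    simp only [x, Pi.add_apply, Pi.single_apply, Pi.ofNat_apply]
    split_ifs <;> linarith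
  have hsum : ∑ l, x l = e + 2 := by
    simp only [x, Pi.add_apply, Pi.ofNat_apply, sum_add_distrib, sum_const, card_univ,
      Fintype.card_fin, nsmul_eq_mul, sum_pi_single', Finset.mem_univ, if_true]
    ring
  have hxi : x i = τ + 2 := by simp [x, hij, hik, add_comm]
  have hxj : x j = e + 4 - 2 * n - τ - σ := by simp [x, hij.symm, hjk]; ring
  have hxk : x k = σ + 2 := by simp [x, hik.symm, hjk.symm, add_comm]
  obtain ⟨c, hc, hcx⟩ := hL.exists_tile_ge h0 hx hsum
  exact ⟨c, hc, by linarith [hcx i], by linarith [hcx j], by linarith [hcx k]⟩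

/-- Either a single tile covers the whole row `σ`, or two distinct tiles cover adjacent points
of it; in the latter case the bound on `min c + min c'` pins the `k`-coordinate of one of them
just above `σ`. -/
lemma exists_tile_spanning_or_near (hL : IsQPLCode e L) (h0 : 0 ∈ L) (hij : i ≠ j) (hik : i ≠ k)
    (hjk : j ≠ k) {σ : ℤ} (hσ : 0 ≤ σ) (hσe : σ ≤ e + 2 - 2 * n) :
    (∃ c, IsTile L e c ∧ e + 3 - 2 * n - σ ≤ c i ∧ e + 3 - 2 * n - σ ≤ c j ∧ σ + 1 ≤ c k) ∨
      ∃ c, IsTile L e c ∧ σ + 1 ≤ c k ∧ c k ≤ σ + n + 2 := by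
  have hrow : ∀ τ, 0 ≤ τ → τ ≤ e + 2 - 2 * n - σ →
      ∃ c, IsTile L e c ∧ τ + 1 ≤ c i ∧ e + 3 - 2 * n - τ - σ ≤ c j ∧ σ + 1 ≤ c k :=
    fun τ hτ hτσ => hL.exists_tile_row h0 hij hik hjk hτ hσ (by linarith)
  choose! t ht using hrow
  by_cases hconst : ∀ τ, 0 ≤ τ → τ < e + 2 - 2 * n - σ → t τ = t (τ + 1)
  · left
    have hlast := ht _ (by linarith) le_rfl
    rw [← eq_of_forall_eq_add_one t (by linarith) hconst] at hlast
    obtain ⟨hc, -, hj, hk⟩ := ht 0 le_rfl (by linarith)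
    exact ⟨t 0, hc, by linarith [hlast.2.1], by linarith, hk⟩
  · right
    push Not at hconst
    obtain ⟨τ, hτ, hτσ, hne⟩ := hconst
    obtain ⟨hc, hci, hcj, hck⟩ := ht τ hτ hτσ.le
    obtain ⟨hc', hci', hcj', hck'⟩ := ht (τ + 1) (by linarith) (by linarith)
    have hmin := hL.min_add_min_add_min_le hij hik hjk hc hc' hne
    have hmin_i : τ + 1 ≤ min (t τ i) (t (τ + 1) i) := le_min hci (by linarith)
    have hmin_j : e + 2 - 2 * n - τ - σ ≤ min (t τ j) (t (τ + 1) j) :=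
      le_min (by linarith) (by linarith)
    rcases min_le_iff.mp (show min (t τ k) (t (τ + 1) k) ≤ σ + n + 2 by linarith) with h | h
    · exact ⟨t τ, hc, hck, h⟩
    · exact ⟨t (τ + 1), hc', hck', h⟩

/-- Two spanned rows low in the face are spanned by the same tile, since otherwise the bound on
`min c + min c'` fails; that tile then has `k`-coordinate at least the higher row, which its
bounded coordinate sum allows only up to about twice the lower one. -/
lemma le_two_mul_add_of_spanning (hL : IsQPLCode e L) (hij : i ≠ j) (hik : i ≠ k) (hjk : j ≠ k)
    {a σ : ℤ} (ha : 0 ≤ a) (haσ : a ≤ σ) (hσe : 2 * σ + n < e + 2 - 2 * n) {c c' : Fin n → ℤ}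
    (hc : IsTile L e c ∧ e + 3 - 2 * n - a ≤ c i ∧ e + 3 - 2 * n - a ≤ c j ∧ a + 1 ≤ c k)
    (hc' : IsTile L e c' ∧ e + 3 - 2 * n - σ ≤ c' i ∧ e + 3 - 2 * n - σ ≤ c' j ∧
      σ + 1 ≤ c' k) :
    σ ≤ 2 * a + 3 * n := by
  obtain ⟨hc, hci, hcj, hck⟩ := hc
  obtain ⟨hc', hci', hcj', hck'⟩ := hc'
  obtain rfl : c = c' := by
    by_contra hne
    have := hL.min_add_min_add_min_le hij hik hjk hc hc' hne
    linarith [le_min (by linarith : e + 3 - 2 * n - σ ≤ c i) hci',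
      le_min (by linarith : e + 3 - 2 * n - σ ≤ c j) hcj', le_min hck (by linarith : a + 1 ≤ c' k)]
  linarith [add_add_add_le_sum hc.2.1 hij hik hjk, hc.2.2]

lemma card_le_of_forall_exists_tile_near (hL : IsQPLCode e L) (k : Fin n) (s : Finset ℤ)
    (hs : ∀ σ ∈ s, ∃ c, IsTile L e c ∧ σ + 1 ≤ c k ∧ c k ≤ σ + n + 2) :
    #s ≤ (n + 2) * (4 * n) ^ n := by
  classical
  choose! t ht using hs
  have hfiber : ∀ b ∈ s.image t, #{σ ∈ s | t σ = b} ≤ n + 2 := fun b _ => by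
    calc #{σ ∈ s | t σ = b} ≤ #(Icc (b k - n - 2) (b k - 1)) := card_le_card fun σ hσ => by
          obtain ⟨hσs, rfl⟩ := mem_filter.mp hσ
          have := ht σ hσs
          exact mem_Icc.mpr ⟨by linarith, by linarith⟩
      _ = n + 2 := by rw [Int.card_Icc]; omega
  have htiles : #(s.image t) ≤ (4 * n) ^ n := by
    refine card_le_pow_of_lt_leeDist (d := e / n + 1) (Nat.succ_pos _) _ ?_ ?_
    · simp only [Finset.mem_image, forall_exists_index, and_imp]
      rintro _ σ hσ rfl l
      have hn : e < n * (e / n + 1) := Nat.lt_mul_div_succ e (Fin.pos l)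
      have hle : t σ l ≤ ∑ l, t σ l :=
        single_le_sum (fun l _ => by linarith [(ht σ hσ).1.2.1 l]) (mem_univ l)
      have : (e : ℤ) < n * (e / n + 1 : ℕ) := by exact_mod_cast hn
      push_cast at this ⊢
      constructor <;> nlinarith [(ht σ hσ).1.2.1 l, (ht σ hσ).1.2.2]
    · simp only [Finset.mem_image, forall_exists_index, and_imp]
      rintro _ σ hσ rfl _ σ' hσ' rfl hne
      have := hL.1 _ (ht σ hσ).1.1 _ (ht σ' hσ').1.1 hne
      simp only [add_tsub_cancel_right]
      linarith [Nat.mul_div_le e n]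
  calc #s ≤ (n + 2) * #(s.image t) := card_le_mul_card_image s _ hfiber
    _ ≤ (n + 2) * (4 * n) ^ n := Nat.mul_le_mul_left _ htiles

end Face

end IsQPLCode

/-- Rows `0, …, H`, each spanned (`P`) or with a tile top nearby (`Q`): the rows with a top are
few, so some row `a ≤ K` is spanned, and every row above `2a + C` must then have a top. -/
lemma le_three_mul_add_of_rows {P Q : ℤ → Prop} {H C : ℤ} {K : ℕ} (hC : 0 ≤ C)
    (hPQ : ∀ σ, 0 ≤ σ → σ ≤ H → P σ ∨ Q σ)
    (hQ : ∀ s : Finset ℤ, (∀ σ ∈ s, Q σ) → #s ≤ K)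
    (hP : ∀ a σ, 0 ≤ a → a ≤ σ → σ ≤ H → P a → P σ → σ ≤ 2 * a + C) :
    H ≤ 3 * K + C := by
  by_contra! hH
  obtain ⟨a, ha, haK, hPa⟩ : ∃ a : ℤ, 0 ≤ a ∧ a ≤ K ∧ P a := by
    by_contra! hno
    have := hQ (Finset.Icc 0 K) fun σ hσ => by
      obtain ⟨h₁, h₂⟩ := mem_Icc.mp hσ
      exact (hPQ σ h₁ (by linarith)).resolve_left (hno σ h₁ h₂)
    rw [Int.card_Icc] at this
    omega
  have := hQ (Finset.Ioc (2 * K + C) H) fun σ hσ => by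
    obtain ⟨h₁, h₂⟩ := mem_Ioc.mp hσ
    refine (hPQ σ (by linarith) h₂).resolve_left fun hPσ => ?_
    linarith [hP a σ ha (by linarith) h₂ hPa hPσ]
  rw [Int.card_Ioc] at this
  omega

theorem IsQPLCode.le_of_zero_mem {n e : ℕ} {L : Set (Fin n → ℤ)} (hL : IsQPLCode e L)
    (h0 : 0 ∈ L) {i j k : Fin n} (hij : i ≠ j) (hik : i ≠ k) (hjk : j ≠ k) :
    e ≤ 6 * ((n + 2) * (4 * n) ^ n) + 9 * n := by
  by_contra! he
  set K := (n + 2) * (4 * n) ^ n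
  have := le_three_mul_add_of_rows (H := 3 * K + 3 * n + 1) (C := 3 * n) (K := K)
    (by positivity) (fun σ hσ hσH => hL.exists_tile_spanning_or_near h0 hij hik hjk hσ (by omega))
    (hL.card_le_of_forall_exists_tile_near k)
    fun a σ ha haσ hσH ⟨_, hc⟩ ⟨_, hc'⟩ =>
      hL.le_two_mul_add_of_spanning hij hik hjk ha haσ (by omega) hc hc'
  omega

theorem finitely_many_linear_QPL (n : ℕ) (hn : 2 < n) :
    {e : ℕ | 1 ≤ e ∧
      ∃ L : AddSubgroup (Fin n → ℤ), IsQPLCode e (L : Set (Fin n → ℤ))}.Finite := by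
  refine (Set.finite_Iic (6 * ((n + 2) * (4 * n) ^ n) + 9 * n)).subset ?_
  rintro e ⟨-, L, hL⟩
  exact hL.le_of_zero_mem L.zero_mem (i := ⟨0, by omega⟩) (j := ⟨1, by omega⟩)
    (k := ⟨2, by omega⟩) (by simp) (by simp) (by simp)
end

section
/- Suppose k has an optimal embedding in ℤ^n, witnessed by a finite abelian group G of order k and a homomorphism φ : ℤ^n → G injective on S_{n,r} and surjective on S_{n,r+1}, where |S_{n,r}| ≤ k < |S_{n,r+1}|. Then there exists a set K ⊆ ℤ^n with S_{n,r} ⊆ K ⊆ S_{n,r+1} and |K| = k on which φ restricts to a bijection, and consequently there is a lattice tiling of ℤ^n by K. -/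
open Set

/-- `L` is a lattice tiling of `ℤ^n` by `V`: every `x ∈ ℤ^n` is uniquely `v + l`
with `v ∈ V`, `l ∈ L`. -/
def IsLatticeTiling {n : ℕ} (V : Set (Fin n → ℤ)) (L : AddSubgroup (Fin n → ℤ)) : Prop :=
  ∀ x : Fin n → ℤ, ∃! p : (Fin n → ℤ) × (Fin n → ℤ),
    p.1 ∈ V ∧ p.2 ∈ L ∧ p.1 + p.2 = x

theorem optimal_embedding_gives_tiling
    (n k r : ℕ)
    (hr₁ : sphereCard n r ≤ k) (hr₂ : k < sphereCard n (r + 1))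
    (G : Type) [AddCommGroup G] [Fintype G] (hG : Nat.card G = k)
    (φ : (Fin n → ℤ) →+ G)
    (hinj : Set.InjOn φ (leeSphere n r))
    (hsurj : Set.SurjOn φ (leeSphere n (r + 1)) Set.univ) :
    ∃ K : Set (Fin n → ℤ),
      leeSphere n r ⊆ K ∧ K ⊆ leeSphere n (r + 1) ∧ K.ncard = k ∧
      Set.BijOn φ K Set.univ ∧
      ∃ L : AddSubgroup (Fin n → ℤ), IsLatticeTiling K L := by
  classical
  have hfin : ∀ s : ℕ, (leeSphere n s).Finite := by
    intro s
    apply Set.Finite.subset (Set.Finite.pi (fun i : Fin n => Set.finite_Icc (-(s:ℤ)) s))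
    intro x hx
    simp only [Set.mem_univ_pi, Set.mem_Icc]
    intro i
    have hb : (x i - 0).natAbs ≤ s := by
      exact le_trans (Finset.single_le_sum (f := fun j => (x j - 0).natAbs)
        (fun j _ => Nat.zero_le _) (Finset.mem_univ i)) hx
    omega
  have hmono : leeSphere n r ⊆ leeSphere n (r + 1) := fun x hx => le_trans hx (Nat.le_succ r)
  have hch : ∀ g : G, ∃ x, x ∈ leeSphere n (r + 1) ∧ φ x = g := fun g => hsurj (Set.mem_univ g)
  choose f hf1 hf2 using hch
  set K : Set (Fin n → ℤ) := leeSphere n r ∪ f '' {g | g ∉ φ '' leeSphere n r} with hK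
  have hKsub : K ⊆ leeSphere n (r + 1) := by
    rintro x (hx | ⟨g, _, rfl⟩)
    · exact hmono hx
    · exact hf1 g
  have hbij : Set.BijOn φ K Set.univ := by
    refine ⟨fun x _ => Set.mem_univ _, ?_, ?_⟩
    · rintro a (ha | ⟨g, hg, rfl⟩) b (hb | ⟨g', hg', rfl⟩) hab
      · exact hinj ha hb hab
      · rw [hf2] at hab; exact absurd ⟨a, ha, hab⟩ hg'
      · rw [hf2] at hab; exact absurd ⟨b, hb, hab.symm⟩ hg
      · rw [hf2, hf2] at hab; rw [hab]
    · intro g _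
      by_cases hg : g ∈ φ '' leeSphere n r
      · obtain ⟨x, hx, hxg⟩ := hg
        exact ⟨x, Or.inl hx, hxg⟩
      · exact ⟨f g, Or.inr ⟨g, hg, rfl⟩, hf2 g⟩
  have hKfin : K.Finite := (hfin (r + 1)).subset hKsub
  have hcard : K.ncard = k := by
    have h1 : (φ '' K).ncard = K.ncard := Set.ncard_image_of_injOn hbij.injOn
    rw [hbij.image_eq] at h1
    rw [← h1, Set.ncard_univ, hG]
  refine ⟨K, Set.subset_union_left, hKsub, hcard, hbij, φ.ker, ?_⟩
  intro x
  obtain ⟨v, hvK, hv⟩ := hbij.surjOn (Set.mem_univ (φ x))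
  refine ⟨(v, x - v), ⟨hvK, ?_, by ring⟩, ?_⟩
  · rw [AddMonoidHom.mem_ker, map_sub, hv, sub_self]
  · rintro ⟨v', l'⟩ ⟨hv', hl', heq⟩
    rw [AddMonoidHom.mem_ker] at hl'
    have hφ : φ v' = φ x := by rw [← heq, map_add, hl', add_zero]
    have hvv : v' = v := hbij.injOn hv' hvK (hφ.trans hv.symm)
    have : l' = x - v := by rw [← hvv, ← heq]; ring
    simp [hvv, this]
end
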